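/- If N is an S-secondary submodule of an R-module M, then √(Ann_R(N)) is an S-prime ideal of R. -/
import Mathlib


open Pointwise

/-- A multiplicatively closed subset of `R`: `0 ∉ S`, `1 ∈ S`, closed under products. -/
def MultClosedSet {R : Type*} [CommRing R] (S : Set R) : Prop :=
  (0 : R) ∉ S ∧ (1 : R) ∈ S ∧ ∀ a ∈ S, ∀ b ∈ S, a * b ∈ S

/-- `N` is an `S`-secondary submodule of `M`. -/
def IsSSecondary {R : Type*} [CommRing R] {M : Type*} [AddCommGroup M] [Module R M]
    (S : Set R) (N : Submodule R M) : Prop :=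
  ((N.annihilator.radical : Set R) ∩ S = ∅) ∧
    ∃ s ∈ S, ∀ r : R, (s * r) • N = s • N ∨ ∃ t : ℕ, 1 ≤ t ∧ ((s * r) ^ t) • N = ⊥

/-- `N` is a secondary submodule of `M`. -/
def IsSecondary {R : Type*} [CommRing R] {M : Type*} [AddCommGroup M] [Module R M]
    (N : Submodule R M) : Prop :=
  N ≠ ⊥ ∧ ∀ r : R, r • N = N ∨ ∃ t : ℕ, 1 ≤ t ∧ (r ^ t) • N = ⊥

/-- An ideal `I` is an `S`-prime ideal of `R`. -/
def IsSPrime {R : Type*} [CommRing R] (S : Set R) (I : Ideal R) : Prop :=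
  ((I : Set R) ∩ S = ∅) ∧ ∃ s ∈ S, ∀ a b : R, a * b ∈ I → s * a ∈ I ∨ s * b ∈ I

lemma smul_eq_bot_iff_mem_ann {R : Type*} [CommRing R] {M : Type*} [AddCommGroup M]
    [Module R M] (r : R) (N : Submodule R M) :
    r • N = ⊥ ↔ r ∈ N.annihilator := by
  constructor
  · intro hb
    rw [Submodule.mem_annihilator]
    intro n hn
    have : r • n ∈ r • N := Submodule.smul_mem_pointwise_smul n r N hn
    rw [hb] at this
    simpa using this
  · intro hr
    rw [Submodule.mem_annihilator] at hr
    rw [eq_bot_iff]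
    intro x hx
    obtain ⟨n, hn, rfl⟩ := Set.mem_smul_set.mp hx
    simp [hr n hn]

lemma pow_smul_eq {R : Type*} [CommRing R] {M : Type*} [AddCommGroup M]
    [Module R M] {s a : R} {N : Submodule R M} (hsa : (s * a) • N = s • N) :
    ∀ k : ℕ, ((s * a) ^ k) • N = (s ^ k) • N := by
  intro k
  induction k with
  | zero => simp
  | succ k ih =>
    rw [pow_succ, pow_succ, mul_smul, hsa, ← mul_smul, mul_comm, mul_smul, ih,
      ← mul_smul, mul_comm]

theorem stmt_10 {R : Type*} [CommRing R] {M : Type*} [AddCommGroup M] [Module R M]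
    (S : Set R) (hS : MultClosedSet S) (N : Submodule R M)
    (h : IsSSecondary S N) : IsSPrime S N.annihilator.radical := by
  constructor
  · exact h.1
  obtain ⟨s, hsS, hP⟩ := h.2
  refine ⟨s, hsS, fun a b hab => ?_⟩
  rcases hP a with ha | ⟨t, ht1, hta⟩
  · rcases hP b with hb | ⟨t, ht1, htb⟩
    · exfalso
      obtain ⟨k, hk⟩ := Ideal.mem_radical_iff.mp hab
      have hbot : ((a * b) ^ k) • N = ⊥ := (smul_eq_bot_iff_mem_ann _ _).mpr hk
      have key : ((s ^ k) * (s ^ k)) • N = ⊥ := by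
        have e1 : ((s * a) ^ k * (s * b) ^ k) • N = ((s ^ k) * (s ^ k)) • N := by
          rw [mul_smul, pow_smul_eq hb, ← mul_smul, mul_comm ((s*a)^k), mul_smul,
            pow_smul_eq ha, ← mul_smul]
        have e2 : (s * a) ^ k * (s * b) ^ k = ((s ^ k) * (s ^ k)) * (a * b) ^ k := by ring
        rw [e2, mul_smul, hbot] at e1
        rw [← e1]
        exact (smul_eq_bot_iff_mem_ann _ _).mpr (by simp [Submodule.mem_annihilator])
      have : s ∈ N.annihilator.radical := by
        rw [Ideal.mem_radical_iff]
        exact ⟨2 * k, by rwa [two_mul, pow_add, ← smul_eq_bot_iff_mem_ann] ⟩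
      have : s ∈ (N.annihilator.radical : Set R) ∩ S := ⟨this, hsS⟩
      rw [h.1] at this
      exact this
    · right
      have : (s * b) ^ t ∈ N.annihilator := (smul_eq_bot_iff_mem_ann _ _).mp htb
      exact Ideal.mem_radical_iff.mpr ⟨t, this⟩
  · left
    have : (s * a) ^ t ∈ N.annihilator := (smul_eq_bot_iff_mem_ann _ _).mp hta
    exact Ideal.mem_radical_iff.mpr ⟨t, this⟩
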